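/- arXiv:2107.10608 — 4 statements merged into one kernel-verified Lean document; each statement's English description precedes it below -/
import Mathlib

section
/- The infinite lower triangular array B = (b_{n,k}(q))_{n,k ≥ 0} is q-totally positive: for every m ≥ 1 and all strictly increasing sequences 0 ≤ n_1 < ... < n_m and 0 ≤ k_1 < ... < k_m, the determinant of the m × m matrix whose (s,t) entry is b_{n_s, k_t}(q) is a polynomial in q with nonnegative coefficients. -/
/-!
Row `n + 1` of `B` is row `n` times the tridiagonal production matrix `J` (`bBProduction`)
with diagonal `1 + q`, superdiagonal `1` and subdiagonal `q` (except `J₁₀ = 2q`). By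
Cauchy–Binet, every minor of `B` with nonzero row indices is a sum of products of a minor of `B`
with smaller row indices and a minor of `J`, and a minor whose first row index is `0` reduces to
a smaller one since row `0` of `B` is `(1, 0, 0, …)`. A minor of a tridiagonal matrix is a
product of entries and of principal minors on intervals of indices; for `J` the latter are
`1 + q ^ L` and `1 + q + ⋯ + q ^ L`, so every minor of `J`, and hence of `B`, has nonnegative
coefficients.
-/

open Polynomial

/-- The triangular array `B = (b_{n,k}(q))` defined by `b_{0,0} = 1`, `b_{n,k} = 0` for `k > n`,
`b_{n,0} = (1+q) b_{n-1,0} + 2q b_{n-1,1}` and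
`b_{n,k} = b_{n-1,k-1} + (1+q) b_{n-1,k} + q b_{n-1,k+1}` for `k ≥ 1`. -/
noncomputable def bB : ℕ → ℕ → Polynomial ℝ
  | 0, 0 => 1
  | 0, _ + 1 => 0
  | n + 1, 0 => (1 + Polynomial.X) * bB n 0 + 2 * Polynomial.X * bB n 1
  | n + 1, k + 1 => bB n k + (1 + Polynomial.X) * bB n (k + 1) + Polynomial.X * bB n (k + 2)

namespace Polynomial

variable (R : Type*) [Semiring R] [PartialOrder R] [IsOrderedRing R]

def coeffNonneg : Subsemiring R[X] where
  carrier := {p | ∀ n, 0 ≤ p.coeff n}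
  zero_mem' n := by simp
  one_mem' n := by rw [coeff_one]; split_ifs <;> simp
  add_mem' hp hq n := by rw [coeff_add]; exact add_nonneg (hp n) (hq n)
  mul_mem' hp hq n := by
    rw [coeff_mul]; exact Finset.sum_nonneg fun x _ => mul_nonneg (hp _) (hq _)

variable {R}

theorem mem_coeffNonneg {p : R[X]} : p ∈ coeffNonneg R ↔ ∀ n, 0 ≤ p.coeff n := Iff.rfl

theorem X_mem_coeffNonneg : (X : R[X]) ∈ coeffNonneg R := fun n => by
  rw [coeff_X]; split_ifs <;> simp

end Polynomial

open Finset Equiv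

section CauchyBinet

variable {R : Type*} [CommRing R]

theorem Matrix.det_mul_eq_sum_det_submatrix_mul_prod {m n : Type*} [Fintype m] [DecidableEq m]
    [Fintype n] (A : Matrix m n R) (B : Matrix n m R) :
    (A * B).det = ∑ p : m → n, (A.submatrix id p).det * ∏ i, B (p i) i := by
  simp only [det_apply', mul_apply, prod_univ_sum, mul_sum, Fintype.piFinset_univ,
    prod_mul_distrib, sum_mul, submatrix_apply, id]
  rw [Finset.sum_comm]
  refine sum_congr rfl fun p _ => sum_congr rfl fun σ _ => by ring

theorem Finset.sum_injective_eq_sum_strictMono_sum_perm {α M : Type*} [LinearOrder α] [Fintype α]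
    [AddCommMonoid M] {m : ℕ} (F : (Fin m → α) → M) :
    ∑ g : Fin m → α with Function.Injective g, F g =
      ∑ f : Fin m → α with StrictMono f, ∑ σ : Perm (Fin m), F (f ∘ σ) := by
  rw [← sum_product']
  symm
  refine sum_bij (fun fσ _ => fσ.1 ∘ fσ.2) ?_ ?_ ?_ (fun _ _ => rfl)
  · rintro ⟨f, σ⟩ h
    simp only [mem_product, mem_filter_univ, mem_univ, and_true] at h ⊢
    exact h.injective.comp σ.injective
  · rintro ⟨f, σ⟩ h ⟨f', σ'⟩ h' heq
    simp only [mem_product, mem_filter_univ, mem_univ, and_true] at h h' heq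
    have hf : f = f' := (h.range_inj h').mp <| by
      rw [← σ.surjective.range_comp f, heq, σ'.surjective.range_comp]
    subst hf
    exact Prod.ext rfl (Equiv.ext fun x => h.injective (congrFun heq x))
  · intro g hg
    simp only [mem_filter_univ] at hg
    refine ⟨(g ∘ Tuple.sort g, (Tuple.sort g)⁻¹), ?_, ?_⟩
    · simpa using (Tuple.monotone_sort g).strictMono_of_injective
        (hg.comp (Tuple.sort g).injective)
    · ext i; simp

theorem Matrix.det_mul_eq_sum_strictMono {m : ℕ} {α : Type*} [Fintype α] [LinearOrder α]
    (A : Matrix (Fin m) α R) (B : Matrix α (Fin m) R) :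
    (A * B).det = ∑ f : Fin m → α with StrictMono f,
      (A.submatrix id f).det * (B.submatrix f id).det := by
  rw [det_mul_eq_sum_det_submatrix_mul_prod, ← sum_filter_of_ne (p := Function.Injective),
    sum_injective_eq_sum_strictMono_sum_perm]
  · refine sum_congr rfl fun f _ => ?_
    have hsub (σ : Perm (Fin m)) :
        A.submatrix id (f ∘ σ) = (A.submatrix id f).submatrix id σ := rfl
    simp only [hsub, det_permute', det_apply' (B.submatrix f id), mul_sum, submatrix_apply, id,
      Function.comp_apply]
    refine sum_congr rfl fun σ _ => by ring
  · intro p _ hp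
    by_contra hinj
    obtain ⟨i, j, hij, hne⟩ := Function.not_injective_iff.mp hinj
    exact hp (by rw [det_zero_of_column_eq hne fun k => by simp [hij], zero_mul])

end CauchyBinet

theorem Matrix.det_succ_eq_mul_of_column_zero {R : Type*} [CommRing R] {n : ℕ}
    (A : Matrix (Fin (n + 1)) (Fin (n + 1)) R) (h : ∀ i : Fin n, A i.succ 0 = 0) :
    A.det = A 0 0 * (A.submatrix Fin.succ Fin.succ).det := by
  rw [det_succ_column_zero, Fin.sum_univ_succ,
    Finset.sum_eq_zero fun i _ => by rw [h i, mul_zero, zero_mul]]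
  simp

theorem Matrix.det_succ_eq_mul_of_row_zero {R : Type*} [CommRing R] {n : ℕ}
    (A : Matrix (Fin (n + 1)) (Fin (n + 1)) R) (h : ∀ j : Fin n, A 0 j.succ = 0) :
    A.det = A 0 0 * (A.submatrix Fin.succ Fin.succ).det := by
  rw [← det_transpose, det_succ_eq_mul_of_column_zero A.transpose h,
    ← det_transpose (A.submatrix _ _)]
  rfl

theorem Fin.eq_add_of_strictMono_of_succ_le_add_one {n : ℕ} {f g : Fin (n + 2) → ℕ}
    (hf : StrictMono f) (hg : StrictMono g)
    (h : ∀ k : Fin (n + 1), g k.succ ≤ f k.castSucc + 1 ∧ f k.succ ≤ g k.castSucc + 1) :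
    ∀ k, f k = f 0 + k ∧ g k = f 0 + k := by
  have step (k : Fin (n + 1)) : f k.castSucc = g k.castSucc ∧ f k.succ = f k.castSucc + 1 ∧
      g k.succ = g k.castSucc + 1 := by
    have := hf (Fin.castSucc_lt_succ (i := k)); have := hg (Fin.castSucc_lt_succ (i := k))
    have := h k; omega
  intro k
  induction k using Fin.induction with
  | zero => have := step 0; simp_all
  | succ k ih => have := step k; simp only [Fin.val_succ, Fin.val_castSucc] at ih ⊢; omega

section Tridiagonal

variable {R : Type*} [CommRing R]

namespace Matrix

def IsTridiagonal (T : Matrix ℕ ℕ R) : Prop := ∀ i j, i + 1 < j ∨ j + 1 < i → T i j = 0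

def contiguousPrincipalMinor (T : Matrix ℕ ℕ R) (N L : ℕ) : R :=
  (T.submatrix (fun i : Fin L => N + i) (fun i : Fin L => N + i)).det

end Matrix

namespace Matrix.IsTridiagonal

variable {T : Matrix ℕ ℕ R} (hT : T.IsTridiagonal) (S : Subsemiring R)
include hT

theorem contiguousPrincipalMinor_add_two (N L : ℕ) :
    T.contiguousPrincipalMinor N (L + 2) = T N N * T.contiguousPrincipalMinor (N + 1) (L + 1) -
      T N (N + 1) * T (N + 1) N * T.contiguousPrincipalMinor (N + 2) L := by
  set M := T.submatrix (fun i : Fin (L + 2) => N + i) (fun i : Fin (L + 2) => N + i)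
  have hM (i j : Fin (L + 2)) : M i j = T (N + i) (N + j) := rfl
  have h0 : (M.submatrix Fin.succ (Fin.succAbove 0)).det =
      T.contiguousPrincipalMinor (N + 1) (L + 1) := by
    unfold contiguousPrincipalMinor
    congr 1; ext i j
    simp only [submatrix_apply, hM, Fin.succAbove_zero, Fin.val_succ]
    ring_nf
  have h1 : (M.submatrix Fin.succ (Fin.succAbove 1)).det =
      T (N + 1) N * T.contiguousPrincipalMinor (N + 2) L := by
    rw [det_succ_eq_mul_of_column_zero _ fun i => ?_]
    · unfold contiguousPrincipalMinor
      congr 2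
      ext i j
      simp only [submatrix_apply, hM, Fin.one_succAbove_succ, Fin.val_succ]
      ring_nf
    · simp only [submatrix_apply, hM, Fin.one_succAbove_zero]
      exact hT _ _ (Or.inr (by simp))
  change M.det = _
  rw [det_succ_row_zero, Fin.sum_univ_succ, Fin.sum_univ_succ, Finset.sum_eq_zero, add_zero]
  · rw [Fin.succ_zero_eq_one, h0, h1, hM, hM]
    simp only [Fin.val_zero, Fin.val_one, pow_zero, pow_one, add_zero]
    ring
  · intro j _
    rw [hM, hT _ _ (Or.inl (by simp))]
    ring

/-- If consecutive row and column indices drift apart by more than one somewhere, the minor is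
block triangular; otherwise the row and column indices form one and the same interval. -/
theorem det_submatrix_mem (hentry : ∀ i j, T i j ∈ S)
    (hprincipal : ∀ N L, T.contiguousPrincipalMinor N L ∈ S) {ι : Type*} [Fintype ι]
    [LinearOrder ι] {r c : ι → ℕ} (hr : StrictMono r) (hc : StrictMono c) :
    (T.submatrix r c).det ∈ S := by
  induction hcard : Fintype.card ι using Nat.strong_induction_on generalizing ι with
  | _ n ih =>
  have hblock {p : ι → Prop} [DecidablePred p] {a b : ι} (ha : ¬p a) (hb : p b) :
      (toSquareBlockProp (T.submatrix r c) p).det *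
        (toSquareBlockProp (T.submatrix r c) fun i => ¬p i).det ∈ S :=
    mul_mem (ih _ (hcard ▸ Fintype.card_subtype_lt ha) (hr.comp (Subtype.strictMono_coe _))
      (hc.comp (Subtype.strictMono_coe _)) rfl)
      (ih _ (hcard ▸ Fintype.card_subtype_lt (not_not.mpr hb))
        (hr.comp (Subtype.strictMono_coe _)) (hc.comp (Subtype.strictMono_coe _)) rfl)
  let e := Fintype.orderIsoFinOfCardEq ι hcard
  obtain _ | _ | n := n
  · have : IsEmpty ι := Fintype.card_eq_zero_iff.mp hcard
    rw [det_isEmpty]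
    exact one_mem S
  · rw [← det_submatrix_equiv_self e.toEquiv, det_fin_one]
    exact hentry _ _
  by_cases hsplit : ∃ k : Fin (n + 1),
    r (e k.castSucc) + 1 < c (e k.succ) ∨ c (e k.castSucc) + 1 < r (e k.succ)
  · have hpred {k : Fin (n + 1)} {i : ι} (hi : i < e k.succ) : i ≤ e k.castSucc := by
      rw [← e.symm_apply_le, Fin.le_castSucc_iff, e.symm_apply_lt]
      exact hi
    have h0 (k : Fin (n + 1)) : e 0 < e k.succ := e.strictMono (Fin.succ_pos k)
    obtain ⟨k, hupper | hlower⟩ := hsplit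
    · rw [twoBlockTriangular_det (T.submatrix r c) (e k.succ ≤ ·) fun i hi j hj => hT _ _ <|
        Or.inl (by have := hr.monotone (hpred (not_le.mp hi)); have := hc.monotone hj; omega)]
      exact hblock (not_le.mpr (h0 k)) le_rfl
    · rw [twoBlockTriangular_det (T.submatrix r c) (· < e k.succ) fun i hi j hj => hT _ _ <|
        Or.inr (by have := hc.monotone (hpred hj); have := hr.monotone (not_lt.mp hi); omega)]
      exact hblock (lt_irrefl _) (h0 k)
  · push Not at hsplit
    have hcontig := Fin.eq_add_of_strictMono_of_succ_le_add_one (hr.comp e.strictMono)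
      (hc.comp e.strictMono) hsplit
    have hwindow : (T.submatrix r c).submatrix e.toEquiv e.toEquiv =
        T.submatrix (fun i : Fin (n + 2) => r (e 0) + i) (fun i : Fin (n + 2) => r (e 0) + i) := by
      ext i j
      exact congrArg₂ T (hcontig i).1 (hcontig j).2
    rw [← det_submatrix_equiv_self e.toEquiv, hwindow]
    exact hprincipal _ _

end Matrix.IsTridiagonal

end Tridiagonal

/-- The production matrix of `bB`: `bB (n + 1) k = ∑ j, bB n j * bBProduction j k`. -/
noncomputable def bBProduction : Matrix ℕ ℕ ℝ[X] := Matrix.of fun j k =>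
  if k = j + 1 then 1
  else if k = j then 1 + X
  else if j = k + 1 then (if k = 0 then 2 * X else X)
  else 0

namespace bBProduction

theorem isTridiagonal : bBProduction.IsTridiagonal := fun i j h => by
  simp only [bBProduction, Matrix.of_apply]
  rw [if_neg (by omega), if_neg (by omega), if_neg (by omega)]

theorem apply_self (j : ℕ) : bBProduction j j = 1 + X := by
  simp [bBProduction]

theorem apply_add_one (j : ℕ) : bBProduction j (j + 1) = 1 := by
  simp [bBProduction]

theorem add_one_apply {k : ℕ} (hk : k ≠ 0) : bBProduction (k + 1) k = X := by
  rw [bBProduction, Matrix.of_apply, if_neg (by omega), if_neg (by omega), if_pos rfl, if_neg hk]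

theorem one_apply_zero : bBProduction 1 0 = 2 * X := by
  simp [bBProduction]

theorem apply_mem_coeffNonneg (j k : ℕ) : bBProduction j k ∈ coeffNonneg ℝ := by
  have hX := X_mem_coeffNonneg (R := ℝ)
  simp only [bBProduction, Matrix.of_apply]
  split_ifs
  exacts [one_mem _, add_mem (one_mem _) hX, mul_mem (ofNat_mem _ 2) hX, hX, zero_mem _]

theorem contiguousPrincipalMinor_succ (N L : ℕ) :
    bBProduction.contiguousPrincipalMinor (N + 1) L = ∑ i ∈ range (L + 1), X ^ i := by
  induction L using Nat.twoStepInduction generalizing N with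
  | zero => simp [Matrix.contiguousPrincipalMinor]
  | one => simp [Matrix.contiguousPrincipalMinor, apply_self, geom_sum_two, add_comm]
  | more L ih₀ ih₁ =>
    rw [isTridiagonal.contiguousPrincipalMinor_add_two, ih₁, ih₀, apply_self, apply_add_one,
      add_one_apply N.succ_ne_zero, one_mul]
    linear_combination geom_sum_succ (x := (X : ℝ[X])) (n := L + 1) -
      geom_sum_succ (x := (X : ℝ[X])) (n := L + 2)

theorem contiguousPrincipalMinor_zero (L : ℕ) :
    bBProduction.contiguousPrincipalMinor 0 (L + 1) = 1 + X ^ (L + 1) := by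
  cases L with
  | zero => simp [Matrix.contiguousPrincipalMinor, apply_self]
  | succ L =>
    rw [isTridiagonal.contiguousPrincipalMinor_add_two, contiguousPrincipalMinor_succ,
      contiguousPrincipalMinor_succ, apply_self, apply_add_one, one_apply_zero, one_mul]
    linear_combination geom_sum_succ (x := (X : ℝ[X])) (n := L + 1) +
      X * geom_sum_succ' (x := (X : ℝ[X])) (n := L + 1)

theorem contiguousPrincipalMinor_mem_coeffNonneg (N L : ℕ) :
    bBProduction.contiguousPrincipalMinor N L ∈ coeffNonneg ℝ := by
  have hX := X_mem_coeffNonneg (R := ℝ)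
  obtain _ | N := N
  · obtain _ | L := L
    · simp [Matrix.contiguousPrincipalMinor, one_mem]
    · rw [contiguousPrincipalMinor_zero]
      exact add_mem (one_mem _) (pow_mem hX _)
  · rw [contiguousPrincipalMinor_succ]
    exact sum_mem fun i _ => pow_mem hX i

theorem det_submatrix_mem_coeffNonneg {ι : Type*} [Fintype ι] [LinearOrder ι] {r c : ι → ℕ}
    (hr : StrictMono r) (hc : StrictMono c) :
    (bBProduction.submatrix r c).det ∈ coeffNonneg ℝ :=
  isTridiagonal.det_submatrix_mem _ apply_mem_coeffNonneg contiguousPrincipalMinor_mem_coeffNonneg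
    hr hc

end bBProduction

theorem bB_eq_zero_of_lt {n k : ℕ} (h : n < k) : bB n k = 0 := by
  induction n generalizing k with
  | zero => obtain _ | k := k <;> simp_all [bB]
  | succ n ih =>
    obtain _ | k := k
    · omega
    · simp only [bB, ih (by omega : n < k), ih (by omega : n < k + 1), ih (by omega : n < k + 2)]
      ring

theorem bB_zero_mem_coeffNonneg (k : ℕ) : bB 0 k ∈ coeffNonneg ℝ := by
  obtain _ | k := k
  · exact one_mem _
  · exact zero_mem _

theorem bB_succ_eq_finsum (n k : ℕ) : bB (n + 1) k = ∑ᶠ j, bB n j * bBProduction j k := by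
  have hsupp {s : Finset ℕ} (hs : ∀ j ∉ s, j + 1 < k ∨ k + 1 < j) :
      (Function.support fun j => bB n j * bBProduction j k) ⊆ s :=
    Function.support_subset_iff'.mpr fun j hj => by
      rw [bBProduction.isTridiagonal _ _ (hs j hj), mul_zero]
  obtain _ | k := k
  · rw [finsum_eq_sum_of_support_subset _ (s := {0, 1})
        (hsupp fun j hj => by simp only [mem_insert, mem_singleton, not_or] at hj; omega),
      sum_pair zero_ne_one, bB, bBProduction.apply_self, bBProduction.one_apply_zero]
    ring
  · rw [finsum_eq_sum_of_support_subset _ (s := {k, k + 1, k + 1 + 1})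
        (hsupp fun j hj => by simp only [mem_insert, mem_singleton, not_or] at hj; omega),
      sum_insert (by simp only [mem_insert, mem_singleton]; omega), sum_pair (by omega), bB,
      bBProduction.apply_add_one, bBProduction.apply_self,
      bBProduction.add_one_apply k.succ_ne_zero]
    ring

theorem bB_succ_eq_sum {n K : ℕ} (hK : n < K) (k : ℕ) :
    bB (n + 1) k = ∑ j : Fin K, bB n j * bBProduction j k := by
  rw [bB_succ_eq_finsum, Fin.sum_univ_eq_sum_range (fun j => bB n j * bBProduction j k),
    finsum_eq_sum_of_support_subset _ <| Function.support_subset_iff'.mpr fun j hj => ?_]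
  rw [bB_eq_zero_of_lt (by simp only [coe_range, Set.mem_Iio, not_lt] at hj; omega), zero_mul]

theorem det_submatrix_bB_succ {m K : ℕ} {n : Fin m → ℕ} (hK : ∀ s, n s < K)
    (k : Fin m → ℕ) :
    ((Matrix.of bB).submatrix (fun s => n s + 1) k).det =
      ∑ f : Fin m → Fin K with StrictMono f,
        ((Matrix.of bB).submatrix n (Fin.val ∘ f)).det *
          (bBProduction.submatrix (Fin.val ∘ f) k).det := by
  have hprod : (Matrix.of bB).submatrix (fun s => n s + 1) k =
      (Matrix.of fun s (j : Fin K) => bB (n s) j) *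
        Matrix.of fun (j : Fin K) t => bBProduction j (k t) := by
    ext s t
    simp [Matrix.mul_apply, bB_succ_eq_sum (hK s)]
  rw [hprod, Matrix.det_mul_eq_sum_strictMono]
  rfl

theorem det_submatrix_bB_mem_coeffNonneg : ∀ {m : ℕ} {n k : Fin m → ℕ}, StrictMono n →
    StrictMono k → ((Matrix.of bB).submatrix n k).det ∈ coeffNonneg ℝ
  | 0, _, _, _, _ => by simp [one_mem]
  | m + 1, n, k, hn, hk => by
    induction hd : n 0 generalizing n k with
    | zero =>
      rw [Matrix.det_succ_eq_mul_of_row_zero _ fun j => ?_]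
      · refine mul_mem ?_ (det_submatrix_bB_mem_coeffNonneg (hn.comp Fin.strictMono_succ)
          (hk.comp Fin.strictMono_succ))
        rw [Matrix.submatrix_apply, Matrix.of_apply, hd]
        exact bB_zero_mem_coeffNonneg _
      · rw [Matrix.submatrix_apply, Matrix.of_apply, hd]
        exact bB_eq_zero_of_lt ((Nat.zero_le _).trans_lt (hk (Fin.succ_pos j)))
    | succ d ih =>
      obtain ⟨n, rfl⟩ : ∃ n' : Fin (m + 1) → ℕ, n = fun s => n' s + 1 :=
        ⟨fun s => n s - 1, funext fun s => by
          have := hn.monotone (Fin.zero_le s); dsimp only; omega⟩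
      have hn' : StrictMono n := fun a b hab => Nat.add_lt_add_iff_right.mp (hn hab)
      rw [det_submatrix_bB_succ fun s => Nat.lt_succ_of_le (hn'.monotone (Fin.le_last s))]
      refine sum_mem fun f hf => ?_
      have hf : StrictMono (Fin.val ∘ f) := Fin.val_strictMono.comp (by simpa using hf)
      exact mul_mem (ih _ _ hn' hf (by simpa using hd))
        (bBProduction.det_submatrix_mem_coeffNonneg hf hk)

theorem bB_q_totally_positive_general
    (m : ℕ)
    (n k : Fin m → ℕ) (hn : StrictMono n) (hk : StrictMono k) (r : ℕ) :
    0 ≤ (Matrix.det (Matrix.of fun s t : Fin m => bB (n s) (k t))).coeff r :=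
  mem_coeffNonneg.mp (det_submatrix_bB_mem_coeffNonneg hn hk) r

/-- The triangular array `B` is `q`-totally positive: every minor has
nonnegative coefficients. -/
theorem bB_q_totally_positive
    (m : ℕ) (hm : 1 ≤ m)
    (n k : Fin m → ℕ) (hn : StrictMono n) (hk : StrictMono k) (r : ℕ) :
    0 ≤ (Matrix.det (Matrix.of fun s t : Fin m => bB (n s) (k t))).coeff r :=
  bB_q_totally_positive_general m n k hn hk r
end

section
/- For every n ≥ 0, the first-column entry b_{n,0}(q) of the triangular array B equals the n-th Narayana polynomial of type B, i.e. b_{n,0}(q) = Σ_{k=0}^{n} binom(n,k)^2 q^k. -/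
open Polynomial

noncomputable def S (n k : ℕ) : Polynomial ℝ :=
  ∑ j ∈ Finset.range (n + 1), Polynomial.C ((n.choose j : ℝ) * (n.choose (j + k) : ℝ)) * X ^ j

lemma coeff_S (n k m : ℕ) :
    (S n k).coeff m = (n.choose m : ℝ) * (n.choose (m + k) : ℝ) := by
  unfold S
  rw [Polynomial.finset_sum_coeff]
  simp only [Polynomial.coeff_C_mul, Polynomial.coeff_X_pow, mul_ite, mul_one, mul_zero]
  rw [Finset.sum_ite_eq (Finset.range (n+1)) m]
  by_cases h : m ∈ Finset.range (n + 1)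
  · simp [h]
  · simp only [h, if_false]
    rw [Finset.mem_range] at h
    rw [Nat.choose_eq_zero_of_lt (by omega)]
    simp

lemma key (n a b : ℕ) : (((n+1).choose (a+1) : ℝ)) * (((n+1).choose (b+1) : ℝ))
    = ((n.choose a : ℝ) + n.choose (a+1)) * ((n.choose b : ℝ) + n.choose (b+1)) := by
  push_cast [Nat.choose_succ_succ']
  ring

lemma bB_eq_S : ∀ n k, bB n k = S n k := by
  intro n
  induction n with
  | zero =>
    intro k
    cases k with
    | zero => simp [bB, S]
    | succ k => simp [bB, S]
  | succ n ih =>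
    intro k
    cases k with
    | zero =>
      show (1 + X) * bB n 0 + 2 * X * bB n 1 = S (n+1) 0
      rw [ih 0, ih 1]
      ext m
      simp only [Polynomial.coeff_add, add_mul, one_mul, mul_assoc, Polynomial.coeff_X_mul,
        coeff_S, Polynomial.coeff_ofNat_mul]
      cases m with
      | zero =>
        simp [coeff_S]
      | succ m =>
        simp only [Polynomial.coeff_add, Polynomial.coeff_X_mul, coeff_S]
        rw [show m + 1 + 0 = m + 0 + 1 from by omega]
        rw [key n m (m+0)]
        ring
    | succ k =>
      show bB n k + (1 + X) * bB n (k+1) + X * bB n (k+2) = S (n+1) (k+1)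
      rw [ih k, ih (k+1), ih (k+2)]
      ext m
      simp only [Polynomial.coeff_add, add_mul, one_mul, Polynomial.coeff_X_mul]
      cases m with
      | zero =>
        simp only [Polynomial.coeff_add, coeff_S]
        simp [coeff_S, Nat.choose_succ_succ']
      | succ m =>
        simp only [Polynomial.coeff_add, Polynomial.coeff_X_mul, coeff_S]
        rw [show m + 1 + k = m + k + 1 from by omega,
          show m + (k + 1) = m + k + 1 from by omega,
          show m + 1 + (k + 1) = m + k + 1 + 1 from by omega,
          show m + (k + 2) = m + k + 1 + 1 from by omega]
        rw [key n m (m+k+1)]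
        ring

/-- The first column of the triangular array `B` consists of the type `B` Narayana
polynomials: `b_{n,0}(q) = ∑_{k=0}^{n} binom(n,k)² qᵏ`. -/
theorem bB_first_column_eq_narayanaB (n : ℕ) :
    bB n 0 = ∑ k ∈ Finset.range (n + 1),
      ((Nat.choose n k : Polynomial ℝ)) ^ 2 * Polynomial.X ^ k := by
  rw [bB_eq_S, S]
  refine Finset.sum_congr rfl fun j _ => ?_
  simp [sq, map_mul, Polynomial.C_eq_natCast]
end

section
/- Let e and f be real numbers with f ≥ e ≥ 0, and let (c_{n,k}(q))_{n,k ≥ 0} be defined by c_{0,0}(q) = 1, c_{n,k}(q) = 0 unless n ≥ k ≥ 0, and for n ≥ 1 by c_{n,0}(q) = ((f − e) + e q)·c_{n−1,0}(q) + f q·c_{n−1,1}(q) and, for k ≥ 1, c_{n,k}(q) = c_{n−1,k−1}(q) + (1 + q)·c_{n−1,k}(q) + q·c_{n−1,k+1}(q). Then the first column (c_{n,0}(q))_{n ≥ 0} is q-log-convex: for every n ≥ 1, the polynomial c_{n+1,0}(q)·c_{n−1,0}(q) − c_{n,0}(q)^2 has all coefficients nonnegative. -/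
/-!
Let `J` be the tridiagonal production matrix of the triangle, so that row `n + 1` is row `n`
times `J`. Off the two bands, every `2 × 2` minor of `J` with increasing rows and columns is a
product of entries, and the two remaining ones are `(f - e) + e q²` and `1 + q + q²`; so all of
them have nonnegative coefficients. By the Binet–Cauchy identity, each `2 × 2` minor of rows
`n + 1, n + 2` of the triangle is a sum of products of minors of rows `n, n + 1` with minors of
`J`, hence by induction all these minors have nonnegative coefficients. The claim is the case of
columns `0, 1`, because `c_{n+1,0} c_{n-1,0} - c_{n,0}² = f q (c_{n-1,0} c_{n,1} - c_{n-1,1} c_{n,0})`.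
-/

open Finset Polynomial

theorem Finset.binet_cauchy_range {R : Type*} [CommRing R] (x y u v : ℕ → R) (N : ℕ) :
    (∑ a ∈ range N, x a * u a) * (∑ b ∈ range N, y b * v b)
      - (∑ a ∈ range N, x a * v a) * (∑ b ∈ range N, y b * u b)
      = ∑ b ∈ range N, ∑ a ∈ range b, (x a * y b - x b * y a) * (u a * v b - u b * v a) := by
  induction N with
  | zero => simp
  | succ N ih =>
    have hnew : ∑ a ∈ range N, (x a * y N - x N * y a) * (u a * v N - u N * v a)
        = (∑ a ∈ range N, x a * u a) * (y N * v N) + x N * u N * (∑ b ∈ range N, y b * v b)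
          - (∑ a ∈ range N, x a * v a) * (y N * u N)
          - x N * v N * (∑ b ∈ range N, y b * u b) := by
      simp only [sum_mul, mul_sum, ← sum_add_distrib, ← sum_sub_distrib]
      exact sum_congr rfl fun a _ => by ring
    simp only [sum_range_succ]
    rw [← ih, hnew]
    ring

namespace Polynomial

def nonnegCoeffs (R : Type*) [Semiring R] [PartialOrder R] [IsOrderedRing R] :
    Subsemiring R[X] where
  carrier := {p | ∀ n, 0 ≤ p.coeff n}
  mul_mem' {p q} hp hq n := by
    rw [coeff_mul]
    exact sum_nonneg fun _ _ => mul_nonneg (hp _) (hq _)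
  one_mem' n := by
    rw [coeff_one]
    split_ifs <;> simp
  add_mem' hp hq n := by
    rw [coeff_add]
    exact add_nonneg (hp n) (hq n)
  zero_mem' n := by simp

variable {R : Type*} [Semiring R] [PartialOrder R] [IsOrderedRing R]

theorem C_mem_nonnegCoeffs {r : R} (hr : 0 ≤ r) : C r ∈ nonnegCoeffs R := fun n => by
  rw [coeff_C]
  split_ifs <;> simp [hr]

theorem X_mem_nonnegCoeffs : (X : R[X]) ∈ nonnegCoeffs R := fun n => by
  rw [coeff_X]
  split_ifs <;> simp

end Polynomial

theorem consecutive_rows_minor_mem {R : Type*} [CommRing R] (S : Subsemiring R)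
    (J r : ℕ → ℕ → R) (hJ0 : ∀ k, J 0 k ∈ S)
    (hJ : ∀ a b j k, a < b → j < k → J a j * J b k - J b j * J a k ∈ S)
    (h00 : r 0 0 = 1) (hr0 : ∀ k, 0 < k → r 0 k = 0)
    (hr : ∀ n N k, n < N → r (n + 1) k = ∑ a ∈ range N, r n a * J a k) :
    ∀ n j k, j < k → r n j * r (n + 1) k - r n k * r (n + 1) j ∈ S := by
  intro n
  induction n with
  | zero =>
    intro j k hjk
    rw [hr0 k (by omega), hr 0 1 k one_pos, sum_range_one, zero_mul, sub_zero]
    rcases Nat.eq_zero_or_pos j with rfl | hj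
    · simpa [h00] using hJ0 k
    · simp [hr0 j hj]
  | succ n ih =>
    intro j k hjk
    rw [hr (n + 1) (n + 2) j (by omega), hr (n + 1) (n + 2) k (by omega),
      hr n (n + 2) j (by omega), hr n (n + 2) k (by omega),
      binet_cauchy_range (r n) (r (n + 1)) (J · j) (J · k)]
    exact sum_mem fun b _ => sum_mem fun a ha =>
      mul_mem (ih a b (mem_range.1 ha)) (hJ a b j k (mem_range.1 ha) hjk)

/-- Column `k` holds the coefficients of the recurrence for `c_{n+1,k}` in terms of row `n`. -/
noncomputable def productionMatrix (e f : ℝ) : ℕ → ℕ → ℝ[X]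
  | a, 0 => (if a = 0 then C (f - e) + C e * X else 0) + (if a = 1 then C f * X else 0)
  | a, k + 1 =>
    (if a = k then 1 else 0) + (if a = k + 1 then 1 + X else 0) + (if a = k + 2 then X else 0)

section productionMatrix

variable {e f : ℝ}

theorem productionMatrix_eq_zero_of_lt {a k : ℕ} (h : a + 1 < k) :
    productionMatrix e f a k = 0 := by
  obtain ⟨k, rfl⟩ : ∃ k', k = k' + 1 := ⟨k - 1, by omega⟩
  simp only [productionMatrix]
  rw [if_neg (by omega), if_neg (by omega), if_neg (by omega)]
  simp

theorem productionMatrix_eq_zero_of_gt {a k : ℕ} (h : k + 1 < a) :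
    productionMatrix e f a k = 0 := by
  cases k with
  | zero =>
    simp only [productionMatrix]
    rw [if_neg (by omega), if_neg (by omega)]
    simp
  | succ k =>
    simp only [productionMatrix]
    rw [if_neg (by omega), if_neg (by omega), if_neg (by omega)]
    simp

theorem productionMatrix_mem (he : 0 ≤ e) (hef : e ≤ f) (a k : ℕ) :
    productionMatrix e f a k ∈ nonnegCoeffs ℝ := by
  have hX := X_mem_nonnegCoeffs (R := ℝ)
  cases k with
  | zero =>
    refine add_mem ?_ ?_ <;> split_ifs
    all_goals first
      | exact zero_mem _
      | exact add_mem (C_mem_nonnegCoeffs (by linarith)) (mul_mem (C_mem_nonnegCoeffs he) hX)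
      | exact mul_mem (C_mem_nonnegCoeffs (by linarith)) hX
  | succ k =>
    refine add_mem (add_mem ?_ ?_) ?_ <;> split_ifs
    all_goals first
      | exact zero_mem _
      | exact one_mem _
      | exact hX
      | exact add_mem (one_mem _) hX

theorem productionMatrix_minor_mem (he : 0 ≤ e) (hef : e ≤ f) {a b j k : ℕ} (hab : a < b)
    (hjk : j < k) :
    productionMatrix e f a j * productionMatrix e f b k
      - productionMatrix e f b j * productionMatrix e f a k ∈ nonnegCoeffs ℝ := by
  have hX := X_mem_nonnegCoeffs (R := ℝ)
  by_cases h : b = a + 1 ∧ j = a ∧ k = a + 1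
  · obtain ⟨rfl, rfl, rfl⟩ := h
    cases j with
    | zero =>
      have hdet : productionMatrix e f 0 0 * productionMatrix e f 1 1
          - productionMatrix e f 1 0 * productionMatrix e f 0 1 = C (f - e) + C e * X ^ 2 := by
        simp [productionMatrix, C_sub]
        ring
      rw [hdet]
      exact add_mem (C_mem_nonnegCoeffs (by linarith))
        (mul_mem (C_mem_nonnegCoeffs he) (pow_mem hX 2))
    | succ a =>
      have hdet : productionMatrix e f (a + 1) (a + 1) * productionMatrix e f (a + 2) (a + 2)
          - productionMatrix e f (a + 2) (a + 1) * productionMatrix e f (a + 1) (a + 2)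
          = 1 + X + X ^ 2 := by
        simp [productionMatrix]
        ring
      rw [hdet]
      exact add_mem (add_mem (one_mem _) hX) (pow_mem hX 2)
  · have hzero : productionMatrix e f b j * productionMatrix e f a k = 0 := by
      rcases le_or_gt k (a + 1) with hk | hk
      · rw [productionMatrix_eq_zero_of_gt (by omega : j + 1 < b), zero_mul]
      · rw [productionMatrix_eq_zero_of_lt hk, mul_zero]
    rw [hzero, sub_zero]
    exact mul_mem (productionMatrix_mem he hef a j) (productionMatrix_mem he hef b k)

theorem row_succ_eq_sum_mul_productionMatrix {c : ℕ → ℕ → ℝ[X]}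
    (hz : ∀ n k : ℕ, n < k → c n k = 0)
    (hrec0 : ∀ n : ℕ, c (n + 1) 0 = (C (f - e) + C e * X) * c n 0 + C f * X * c n 1)
    (hrec : ∀ n k : ℕ, c (n + 1) (k + 1) = c n k + (1 + X) * c n (k + 1) + X * c n (k + 2))
    {n N : ℕ} (hN : n < N) (k : ℕ) :
    c (n + 1) k = ∑ a ∈ range N, c n a * productionMatrix e f a k := by
  have hpick : ∀ i (p : ℝ[X]), ∑ a ∈ range N, c n a * (if a = i then p else 0) = c n i * p := by
    intro i p
    simp only [mul_ite, mul_zero, sum_ite_eq']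
    split_ifs with hi
    · rfl
    · rw [hz n i (by simp at hi; omega), zero_mul]
  cases k with
  | zero =>
    simp only [productionMatrix, mul_add, sum_add_distrib, hpick]
    rw [hrec0]
    ring
  | succ k =>
    simp only [productionMatrix, mul_add, sum_add_distrib, hpick]
    rw [hrec]
    ring

end productionMatrix

/-- For real numbers `f ≥ e ≥ 0`, the first column of the Catalan–Stieltjes matrix
defined by `c_{n,0} = ((f-e) + e q) c_{n-1,0} + f q c_{n-1,1}` and
`c_{n,k} = c_{n-1,k-1} + (1+q) c_{n-1,k} + q c_{n-1,k+1}` (for `k ≥ 1`) is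
`q`-log-convex: for `n ≥ 1`, all coefficients of `c_{n+1,0} c_{n-1,0} - c_{n,0}²`
are nonnegative. -/
theorem first_column_q_log_convex_case1
    (e f : ℝ) (he : 0 ≤ e) (hef : e ≤ f)
    (c : ℕ → ℕ → Polynomial ℝ)
    (h00 : c 0 0 = 1)
    (hz : ∀ n k : ℕ, n < k → c n k = 0)
    (hrec0 : ∀ n : ℕ, c (n + 1) 0 =
      (Polynomial.C (f - e) + Polynomial.C e * Polynomial.X) * c n 0
        + Polynomial.C f * Polynomial.X * c n 1)
    (hrec : ∀ n k : ℕ, c (n + 1) (k + 1) =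
      c n k + (1 + Polynomial.X) * c n (k + 1) + Polynomial.X * c n (k + 2))
    (n : ℕ) (hn : 1 ≤ n) (m : ℕ) :
    0 ≤ (c (n + 1) 0 * c (n - 1) 0 - (c n 0) ^ 2).coeff m := by
  obtain ⟨p, rfl⟩ : ∃ p, n = p + 1 := ⟨n - 1, by omega⟩
  have hminor := consecutive_rows_minor_mem (nonnegCoeffs ℝ) (productionMatrix e f) c
    (productionMatrix_mem he hef 0) (fun _ _ _ _ => productionMatrix_minor_mem he hef) h00
    (fun k => hz 0 k) (fun _ _ k hN => row_succ_eq_sum_mul_productionMatrix hz hrec0 hrec hN k)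
    p 0 1 one_pos
  have hid : c (p + 2) 0 * c p 0 - c (p + 1) 0 ^ 2
      = C f * X * (c p 0 * c (p + 1) 1 - c p 1 * c (p + 1) 0) := by
    rw [hrec0 (p + 1), hrec0 p]
    ring
  rw [Nat.add_sub_cancel, hid]
  exact mul_mem (mul_mem (C_mem_nonnegCoeffs (he.trans hef)) X_mem_nonnegCoeffs) hminor m
end

section
/- Let e and f be real numbers with e ≥ 1 and f ≥ 1, and let (c_{n,k}(q))_{n,k ≥ 0} be defined by c_{0,0}(q) = 1, c_{n,k}(q) = 0 unless n ≥ k ≥ 0, and for n ≥ 1 by c_{n,0}(q) = ((f − 1) + e q)·c_{n−1,0}(q) + e f q·c_{n−1,1}(q) and, for k ≥ 1, c_{n,k}(q) = c_{n−1,k−1}(q) + (1 + e q)·c_{n−1,k}(q) + e q·c_{n−1,k+1}(q). Then the first column (c_{n,0}(q))_{n ≥ 0} is q-log-convex: for every n ≥ 1, the polynomial c_{n+1,0}(q)·c_{n−1,0}(q) − c_{n,0}(q)^2 has all coefficients nonnegative. -/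
open Polynomial

/-- A polynomial has all coefficients nonnegative. -/
def NNpoly (p : Polynomial ℝ) : Prop := ∀ m : ℕ, 0 ≤ p.coeff m

lemma NNpoly.add {p q : Polynomial ℝ} (hp : NNpoly p) (hq : NNpoly q) : NNpoly (p + q) := by
  intro m
  rw [Polynomial.coeff_add]
  exact add_nonneg (hp m) (hq m)

lemma NNpoly.mul {p q : Polynomial ℝ} (hp : NNpoly p) (hq : NNpoly q) : NNpoly (p * q) := by
  intro m
  rw [Polynomial.coeff_mul]
  exact Finset.sum_nonneg fun x _ => mul_nonneg (hp _) (hq _)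

lemma NNpoly_C {a : ℝ} (ha : 0 ≤ a) : NNpoly (Polynomial.C a) := by
  intro m
  rw [Polynomial.coeff_C]
  split_ifs
  · exact ha
  · exact le_rfl

lemma NNpoly_X : NNpoly (Polynomial.X : Polynomial ℝ) := by
  intro m
  rw [Polynomial.coeff_X]
  split_ifs
  · exact zero_le_one
  · exact le_rfl

lemma NNpoly_one : NNpoly (1 : Polynomial ℝ) := by
  intro m
  rw [Polynomial.coeff_one]
  split_ifs
  · exact zero_le_one
  · exact le_rfl

lemma NNpoly_X2 : NNpoly ((Polynomial.X : Polynomial ℝ) ^ 2) := by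
  rw [sq]
  exact NNpoly_X.mul NNpoly_X

/-- For real numbers `e ≥ 1` and `f ≥ 1`, the first column of the Catalan–Stieltjes matrix
defined by `c_{n,0} = ((f-1) + e q) c_{n-1,0} + e f q c_{n-1,1}` and
`c_{n,k} = c_{n-1,k-1} + (1 + e q) c_{n-1,k} + e q c_{n-1,k+1}` (for `k ≥ 1`) is
`q`-log-convex: for `n ≥ 1`, all coefficients of `c_{n+1,0} c_{n-1,0} - c_{n,0}²`
are nonnegative. -/
theorem first_column_q_log_convex_case2
    (e f : ℝ) (he : 1 ≤ e) (hf : 1 ≤ f)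
    (c : ℕ → ℕ → Polynomial ℝ)
    (h00 : c 0 0 = 1)
    (hz : ∀ n k : ℕ, n < k → c n k = 0)
    (hrec0 : ∀ n : ℕ, c (n + 1) 0 =
      (Polynomial.C (f - 1) + Polynomial.C e * Polynomial.X) * c n 0
        + Polynomial.C (e * f) * Polynomial.X * c n 1)
    (hrec : ∀ n k : ℕ, c (n + 1) (k + 1) =
      c n k + (1 + Polynomial.C e * Polynomial.X) * c n (k + 1)
        + Polynomial.C e * Polynomial.X * c n (k + 2))
    (n : ℕ) (hn : 1 ≤ n) (m : ℕ) :
    0 ≤ (c (n + 1) 0 * c (n - 1) 0 - (c n 0) ^ 2).coeff m := by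
  have he0 : (0:ℝ) ≤ e := le_trans zero_le_one he
  have hf0 : (0:ℝ) ≤ f := le_trans zero_le_one hf
  have hf1 : (0:ℝ) ≤ f - 1 := sub_nonneg.2 hf
  have hNN_eX : NNpoly (Polynomial.C e * Polynomial.X) := (NNpoly_C he0).mul NNpoly_X
  have hNN_b0 : NNpoly (Polynomial.C (f - 1) + Polynomial.C e * Polynomial.X) :=
    (NNpoly_C hf1).add hNN_eX
  have hNN_b1 : NNpoly (1 + Polynomial.C e * Polynomial.X) := NNpoly_one.add hNN_eX
  have hNN_e2X2 : NNpoly (Polynomial.C (e ^ 2) * Polynomial.X ^ 2) :=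
    (NNpoly_C (sq_nonneg e)).mul NNpoly_X2
  -- Key: nonnegativity of all 2x2 minors of consecutive rows (Cauchy–Binet induction).
  have key : ∀ p k l : ℕ, k < l → NNpoly (c p k * c (p + 1) l - c p l * c (p + 1) k) := by
    intro p
    induction p with
    | zero =>
      intro k l hkl
      rcases k with _ | t
      · rw [h00, hz 0 l hkl]
        rcases l with _ | l0
        · omega
        rcases l0 with _ | s
        · -- l = 1
          have h11 : c 1 1 = c 0 0 + (1 + Polynomial.C e * Polynomial.X) * c 0 1
              + Polynomial.C e * Polynomial.X * c 0 2 := hrec 0 0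
          rw [hz 0 1 (by norm_num), hz 0 2 (by norm_num), h00] at h11
          simp only [mul_zero, add_zero] at h11
          intro m'
          simp [h11, Polynomial.coeff_one]
          split_ifs
          · exact zero_le_one
          · exact le_rfl
        · -- l = s+2
          rw [hz 1 (s+2) (by omega)]
          intro m'; simp
      · rw [hz 0 (t+1) (by omega), hz 0 l (by omega)]
        intro m'; simp
    | succ p IH =>
      -- minors at distance 0 are trivially zero; combine with IH
      have hm : ∀ i j : ℕ, i ≤ j → NNpoly (c p i * c (p + 1) j - c p j * c (p + 1) i) := by
        intro i j hij
        rcases eq_or_lt_of_le hij with h | h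
        · subst h; intro m'; simp
        · exact IH i j h
      intro k l hkl
      obtain ⟨l', rfl⟩ : ∃ l', l = l' + 1 := ⟨l - 1, by omega⟩
      rcases k with _ | t
      · rcases l' with _ | s
        · -- Case A : k = 0, l = 1
            have h1 : c (p+2) 0 = (Polynomial.C (f - 1) + Polynomial.C e * Polynomial.X) * c (p+1) 0
                + Polynomial.C (e * f) * Polynomial.X * c (p+1) 1 := hrec0 (p+1)
            have h2 : c (p+2) 1 = c (p+1) 0 + (1 + Polynomial.C e * Polynomial.X) * c (p+1) 1
                + Polynomial.C e * Polynomial.X * c (p+1) 2 := hrec (p+1) 0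
            have h3 : c (p+1) 0 = (Polynomial.C (f - 1) + Polynomial.C e * Polynomial.X) * c p 0
                + Polynomial.C (e * f) * Polynomial.X * c p 1 := hrec0 p
            have h4 : c (p+1) 1 = c p 0 + (1 + Polynomial.C e * Polynomial.X) * c p 1
                + Polynomial.C e * Polynomial.X * c p 2 := hrec p 0
            have kid : c (p+1) 0 * c (p+2) 1 - c (p+1) 1 * c (p+2) 0 =
                (Polynomial.C (f - 1) + Polynomial.C (e ^ 2) * Polynomial.X ^ 2) *
                  (c p 0 * c (p+1) 1 - c p 1 * c (p+1) 0)
              + (Polynomial.C e * Polynomial.X * (Polynomial.C (f - 1) + Polynomial.C e * Polynomial.X)) *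
                  (c p 0 * c (p+1) 2 - c p 2 * c (p+1) 0)
              + (Polynomial.C (e ^ 2 * f) * Polynomial.X ^ 2) *
                  (c p 1 * c (p+1) 2 - c p 2 * c (p+1) 1) := by
              rw [h1, h2, h3, h4,
                  show Polynomial.C (e^2*f) = Polynomial.C e * Polynomial.C e * Polynomial.C f by
                    rw [← Polynomial.C_mul, ← Polynomial.C_mul, sq],
                  show Polynomial.C (e^2) = Polynomial.C e * Polynomial.C e by
                    rw [← Polynomial.C_mul, sq],
                  show Polynomial.C (e*f) = Polynomial.C e * Polynomial.C f by rw [← Polynomial.C_mul],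
                  show Polynomial.C (f-1) = Polynomial.C f - 1 by rw [map_sub, map_one]]
              ring
            show NNpoly (c (p+1) 0 * c (p+2) 1 - c (p+1) 1 * c (p+2) 0)
            rw [kid]
            refine NNpoly.add (NNpoly.add ?_ ?_) ?_
            · exact NNpoly.mul (NNpoly.add (NNpoly_C hf1) hNN_e2X2) (hm 0 1 (by omega))
            · exact NNpoly.mul (NNpoly.mul hNN_eX hNN_b0) (hm 0 2 (by omega))
            · exact NNpoly.mul (NNpoly.mul (NNpoly_C (by positivity)) NNpoly_X2) (hm 1 2 (by omega))
        · -- Case B : k = 0, l = s+2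
            have h1 : c (p+2) 0 = (Polynomial.C (f - 1) + Polynomial.C e * Polynomial.X) * c (p+1) 0
                + Polynomial.C (e * f) * Polynomial.X * c (p+1) 1 := hrec0 (p+1)
            have h2 : c (p+2) (s+2) = c (p+1) (s+1) + (1 + Polynomial.C e * Polynomial.X) * c (p+1) (s+2)
                + Polynomial.C e * Polynomial.X * c (p+1) (s+3) := hrec (p+1) (s+1)
            have h3 : c (p+1) 0 = (Polynomial.C (f - 1) + Polynomial.C e * Polynomial.X) * c p 0
                + Polynomial.C (e * f) * Polynomial.X * c p 1 := hrec0 p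
            have h4 : c (p+1) (s+2) = c p (s+1) + (1 + Polynomial.C e * Polynomial.X) * c p (s+2)
                + Polynomial.C e * Polynomial.X * c p (s+3) := hrec p (s+1)
            have kid : c (p+1) 0 * c (p+2) (s+2) - c (p+1) (s+2) * c (p+2) 0 =
                (Polynomial.C (f - 1) + Polynomial.C e * Polynomial.X) *
                  (c p 0 * c (p+1) (s+1) - c p (s+1) * c (p+1) 0)
              + ((Polynomial.C (f - 1) + Polynomial.C e * Polynomial.X) * (1 + Polynomial.C e * Polynomial.X)) *
                  (c p 0 * c (p+1) (s+2) - c p (s+2) * c (p+1) 0)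
              + ((Polynomial.C (f - 1) + Polynomial.C e * Polynomial.X) * (Polynomial.C e * Polynomial.X)) *
                  (c p 0 * c (p+1) (s+3) - c p (s+3) * c (p+1) 0)
              + (Polynomial.C (e * f) * Polynomial.X) *
                  (c p 1 * c (p+1) (s+1) - c p (s+1) * c (p+1) 1)
              + (Polynomial.C (e * f) * Polynomial.X * (1 + Polynomial.C e * Polynomial.X)) *
                  (c p 1 * c (p+1) (s+2) - c p (s+2) * c (p+1) 1)
              + (Polynomial.C (e * f) * Polynomial.X * (Polynomial.C e * Polynomial.X)) *
                  (c p 1 * c (p+1) (s+3) - c p (s+3) * c (p+1) 1) := by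
              rw [h1, h2, h3, h4,
                  show Polynomial.C (e*f) = Polynomial.C e * Polynomial.C f by rw [← Polynomial.C_mul],
                  show Polynomial.C (f-1) = Polynomial.C f - 1 by rw [map_sub, map_one]]
              ring
            show NNpoly (c (p+1) 0 * c (p+2) (s+2) - c (p+1) (s+2) * c (p+2) 0)
            rw [kid]
            refine NNpoly.add (NNpoly.add (NNpoly.add (NNpoly.add (NNpoly.add ?_ ?_) ?_) ?_) ?_) ?_
            · exact NNpoly.mul hNN_b0 (hm 0 (s+1) (by omega))
            · exact NNpoly.mul (NNpoly.mul hNN_b0 hNN_b1) (hm 0 (s+2) (by omega))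
            · exact NNpoly.mul (NNpoly.mul hNN_b0 hNN_eX) (hm 0 (s+3) (by omega))
            · exact NNpoly.mul (NNpoly.mul (NNpoly_C (by positivity)) NNpoly_X) (hm 1 (s+1) (by omega))
            · exact NNpoly.mul (NNpoly.mul (NNpoly.mul (NNpoly_C (by positivity)) NNpoly_X) hNN_b1) (hm 1 (s+2) (by omega))
            · exact NNpoly.mul (NNpoly.mul (NNpoly.mul (NNpoly_C (by positivity)) NNpoly_X) hNN_eX) (hm 1 (s+3) (by omega))
      · rcases Nat.lt_or_ge (t+1) l' with (hD | hC)
        · -- Case D : k = t+1, l = l'+1 with t+2 ≤ l'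
            have h1 : c (p+2) (t+1) = c (p+1) t + (1 + Polynomial.C e * Polynomial.X) * c (p+1) (t+1)
                + Polynomial.C e * Polynomial.X * c (p+1) (t+2) := hrec (p+1) t
            have h2 : c (p+2) (l'+1) = c (p+1) l' + (1 + Polynomial.C e * Polynomial.X) * c (p+1) (l'+1)
                + Polynomial.C e * Polynomial.X * c (p+1) (l'+2) := hrec (p+1) l'
            have h3 : c (p+1) (t+1) = c p t + (1 + Polynomial.C e * Polynomial.X) * c p (t+1)
                + Polynomial.C e * Polynomial.X * c p (t+2) := hrec p t
            have h4 : c (p+1) (l'+1) = c p l' + (1 + Polynomial.C e * Polynomial.X) * c p (l'+1)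
                + Polynomial.C e * Polynomial.X * c p (l'+2) := hrec p l'
            have kid : c (p+1) (t+1) * c (p+2) (l'+1) - c (p+1) (l'+1) * c (p+2) (t+1) =
                (c p t * c (p+1) l' - c p l' * c (p+1) t)
              + (1 + Polynomial.C e * Polynomial.X) *
                  (c p t * c (p+1) (l'+1) - c p (l'+1) * c (p+1) t)
              + (Polynomial.C e * Polynomial.X) *
                  (c p t * c (p+1) (l'+2) - c p (l'+2) * c (p+1) t)
              + (1 + Polynomial.C e * Polynomial.X) *
                  (c p (t+1) * c (p+1) l' - c p l' * c (p+1) (t+1))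
              + ((1 + Polynomial.C e * Polynomial.X) * (1 + Polynomial.C e * Polynomial.X)) *
                  (c p (t+1) * c (p+1) (l'+1) - c p (l'+1) * c (p+1) (t+1))
              + ((1 + Polynomial.C e * Polynomial.X) * (Polynomial.C e * Polynomial.X)) *
                  (c p (t+1) * c (p+1) (l'+2) - c p (l'+2) * c (p+1) (t+1))
              + (Polynomial.C e * Polynomial.X) *
                  (c p (t+2) * c (p+1) l' - c p l' * c (p+1) (t+2))
              + ((Polynomial.C e * Polynomial.X) * (1 + Polynomial.C e * Polynomial.X)) *
                  (c p (t+2) * c (p+1) (l'+1) - c p (l'+1) * c (p+1) (t+2))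
              + ((Polynomial.C e * Polynomial.X) * (Polynomial.C e * Polynomial.X)) *
                  (c p (t+2) * c (p+1) (l'+2) - c p (l'+2) * c (p+1) (t+2)) := by
              rw [h1, h2, h3, h4]
              ring
            show NNpoly (c (p+1) (t+1) * c (p+2) (l'+1) - c (p+1) (l'+1) * c (p+2) (t+1))
            rw [kid]
            refine NNpoly.add (NNpoly.add (NNpoly.add (NNpoly.add (NNpoly.add (NNpoly.add (NNpoly.add (NNpoly.add ?_ ?_) ?_) ?_) ?_) ?_) ?_) ?_) ?_
            · exact hm t l' (by omega)
            · exact NNpoly.mul hNN_b1 (hm t (l'+1) (by omega))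
            · exact NNpoly.mul hNN_eX (hm t (l'+2) (by omega))
            · exact NNpoly.mul hNN_b1 (hm (t+1) l' (by omega))
            · exact NNpoly.mul (NNpoly.mul hNN_b1 hNN_b1) (hm (t+1) (l'+1) (by omega))
            · exact NNpoly.mul (NNpoly.mul hNN_b1 hNN_eX) (hm (t+1) (l'+2) (by omega))
            · exact NNpoly.mul hNN_eX (hm (t+2) l' (by omega))
            · exact NNpoly.mul (NNpoly.mul hNN_eX hNN_b1) (hm (t+2) (l'+1) (by omega))
            · exact NNpoly.mul (NNpoly.mul hNN_eX hNN_eX) (hm (t+2) (l'+2) (by omega))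
        · -- Case C : k = t+1, l = t+2 (since t+1 < l'+1 and l' ≤ t+1 force l' = t+1)
            have hl' : l' = t + 1 := by omega
            subst hl'
            have h1 : c (p+2) (t+1) = c (p+1) t + (1 + Polynomial.C e * Polynomial.X) * c (p+1) (t+1)
                + Polynomial.C e * Polynomial.X * c (p+1) (t+2) := hrec (p+1) t
            have h2 : c (p+2) (t+2) = c (p+1) (t+1) + (1 + Polynomial.C e * Polynomial.X) * c (p+1) (t+2)
                + Polynomial.C e * Polynomial.X * c (p+1) (t+3) := hrec (p+1) (t+1)
            have h3 : c (p+1) (t+1) = c p t + (1 + Polynomial.C e * Polynomial.X) * c p (t+1)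
                + Polynomial.C e * Polynomial.X * c p (t+2) := hrec p t
            have h4 : c (p+1) (t+2) = c p (t+1) + (1 + Polynomial.C e * Polynomial.X) * c p (t+2)
                + Polynomial.C e * Polynomial.X * c p (t+3) := hrec p (t+1)
            have kid : c (p+1) (t+1) * c (p+2) (t+2) - c (p+1) (t+2) * c (p+2) (t+1) =
                (c p t * c (p+1) (t+1) - c p (t+1) * c (p+1) t)
              + (1 + Polynomial.C e * Polynomial.X) *
                  (c p t * c (p+1) (t+2) - c p (t+2) * c (p+1) t)
              + (Polynomial.C e * Polynomial.X) *
                  (c p t * c (p+1) (t+3) - c p (t+3) * c (p+1) t)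
              + (1 + Polynomial.C e * Polynomial.X + Polynomial.C (e ^ 2) * Polynomial.X ^ 2) *
                  (c p (t+1) * c (p+1) (t+2) - c p (t+2) * c (p+1) (t+1))
              + ((1 + Polynomial.C e * Polynomial.X) * (Polynomial.C e * Polynomial.X)) *
                  (c p (t+1) * c (p+1) (t+3) - c p (t+3) * c (p+1) (t+1))
              + (Polynomial.C (e ^ 2) * Polynomial.X ^ 2) *
                  (c p (t+2) * c (p+1) (t+3) - c p (t+3) * c (p+1) (t+2)) := by
              rw [h1, h2, h3, h4,
                show Polynomial.C (e^2) = Polynomial.C e * Polynomial.C e by rw [← Polynomial.C_mul, sq]]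
              ring
            show NNpoly (c (p+1) (t+1) * c (p+2) (t+2) - c (p+1) (t+2) * c (p+2) (t+1))
            rw [kid]
            refine NNpoly.add (NNpoly.add (NNpoly.add (NNpoly.add (NNpoly.add ?_ ?_) ?_) ?_) ?_) ?_
            · exact hm t (t+1) (by omega)
            · exact NNpoly.mul hNN_b1 (hm t (t+2) (by omega))
            · exact NNpoly.mul hNN_eX (hm t (t+3) (by omega))
            · exact NNpoly.mul (NNpoly.add (NNpoly.add NNpoly_one hNN_eX) hNN_e2X2) (hm (t+1) (t+2) (by omega))
            · exact NNpoly.mul (NNpoly.mul hNN_b1 hNN_eX) (hm (t+1) (t+3) (by omega))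
            · exact NNpoly.mul hNN_e2X2 (hm (t+2) (t+3) (by omega))
  -- Main statement from the (0,1) minor.
  obtain ⟨p, rfl⟩ : ∃ p, n = p + 1 := ⟨n - 1, by omega⟩
  show 0 ≤ (c (p+2) 0 * c p 0 - c (p+1) 0 ^ 2).coeff m
  have h1 : c (p+2) 0 = (Polynomial.C (f - 1) + Polynomial.C e * Polynomial.X) * c (p+1) 0
      + Polynomial.C (e * f) * Polynomial.X * c (p+1) 1 := hrec0 (p+1)
  have h2 : c (p+1) 0 = (Polynomial.C (f - 1) + Polynomial.C e * Polynomial.X) * c p 0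
      + Polynomial.C (e * f) * Polynomial.X * c p 1 := hrec0 p
  have kid : c (p+2) 0 * c p 0 - c (p+1) 0 ^ 2 =
      (Polynomial.C (e * f) * Polynomial.X) * (c p 0 * c (p+1) 1 - c p 1 * c (p+1) 0) := by
    rw [h1, h2,
        show Polynomial.C (e*f) = Polynomial.C e * Polynomial.C f by rw [← Polynomial.C_mul],
        show Polynomial.C (f-1) = Polynomial.C f - 1 by rw [map_sub, map_one]]
    ring
  rw [kid]
  exact NNpoly.mul (NNpoly.mul (NNpoly_C (by positivity)) NNpoly_X) (key p 0 1 (by omega)) m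
end
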